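/- For |q| < 1, $a \neq 0$, and every positive integer N: ${}_2\phi_1(a, b; bq/a; q, -q/a) = \frac{(-a; q)_N (bq; q^2)_N}{a^N q^{N(N-1)/2} (bq/a; q)_N} \cdot {}_2\phi_1(a q^N, b q^{2N}; b q^{N+1}/a; q, -q^{1-N}/a)$, provided both series converge (e.g. b = q^{-r} for a nonnegative integer r ≥ 2N so that both series terminate, or |q/a| < 1 and |q^{1-N}/a| < 1). -/

import Mathlib

open Finset

noncomputable def qPoch (a q : ℂ) (n : ℕ) : ℂ := ∏ j ∈ Finset.range n, (1 - a * q ^ j)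

noncomputable def qPochInf (a q : ℂ) : ℂ := ∏' j : ℕ, (1 - a * q ^ j)

noncomputable def phi (a b c q x : ℂ) : ℂ :=
  ∑' i : ℕ, qPoch a q i * qPoch b q i / (qPoch q q i * qPoch c q i) * x ^ i

/-!
Write `A i` for the terms of `φ(α, β; βq/α; q, -q/α)` and `B i` for those of
`φ(αq, βq²; βq²/α; q, -1/α)`. Pochhammer bookkeeping gives the three-term relation
`A i = C * B i + T i - T (i + 1)` with `C = (1 + α)(1 - βq)/(α - βq)` and an explicit remainder `T`,
`T 0 = 0`. For large `i`, `T (i + 1)` is a bounded multiple of `B i` (the ratio tends to a limit as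
`q^i → 0`), so `T` is summable whenever `B` is, the telescoping part sums to zero, and `∑ A = C * ∑ B`.
With `α = a q^k`, `β = b q^(2k)` this relation passes from `φ(aq^k, bq^(2k); bq^(k+1)/a; q, -q^(1-k)/a)`
to the same series with `k + 1`; after `N` steps the factors `C` multiply to
`(-a; q)_N (bq; q²)_N / (a^N q^(N(N-1)/2) (bq/a; q)_N)`.
-/

open Filter Asymptotics Topology

@[simp]
lemma qPoch_zero (a q : ℂ) : qPoch a q 0 = 1 := by simp [qPoch]

lemma qPoch_succ (a q : ℂ) (n : ℕ) : qPoch a q (n + 1) = qPoch a q n * (1 - a * q ^ n) :=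
  prod_range_succ _ n

lemma qPoch_succ' (a q : ℂ) (n : ℕ) : qPoch a q (n + 1) = (1 - a) * qPoch (a * q) q n := by
  simp only [qPoch, prod_range_succ', pow_succ, pow_zero, mul_one, mul_assoc, mul_comm]

lemma qPoch_mul_one_sub (a q : ℂ) (n : ℕ) :
    qPoch a q n * (1 - a * q ^ n) = (1 - a) * qPoch (a * q) q n := by
  rw [← qPoch_succ, qPoch_succ']

lemma qPoch_ne_zero {a q : ℂ} (h : ∀ j : ℕ, a * q ^ j ≠ 1) (n : ℕ) : qPoch a q n ≠ 0 :=
  prod_ne_zero_iff.mpr fun j _ => sub_ne_zero.mpr (h j).symm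

lemma qPoch_self_ne_zero {q : ℂ} (hq : ‖q‖ < 1) (n : ℕ) : qPoch q q n ≠ 0 := by
  refine qPoch_ne_zero (fun j h => ?_) n
  have := congrArg norm h
  rw [← pow_succ', norm_pow, norm_one] at this
  exact (pow_lt_one₀ (norm_nonneg q) hq j.succ_ne_zero).ne this

noncomputable def phiTerm (a b c q x : ℂ) (i : ℕ) : ℂ :=
  qPoch a q i * qPoch b q i / (qPoch q q i * qPoch c q i) * x ^ i

section Contiguous

variable (α β q : ℂ)

noncomputable def contiguousFactor : ℂ :=
  (1 + α) * (1 - β * q) / (α - β * q)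

noncomputable def contiguousRemainder : ℕ → ℂ
  | 0 => 0
  | m + 1 => (α * β * q ^ (m + 1) - 1) * qPoch (α * q) q m * qPoch (β * q) q m /
      (qPoch q q m * qPoch (β * q / α) q (m + 1)) * (-α⁻¹) ^ (m + 1)

lemma contiguousFactor_mul_phiTerm (n : ℕ) :
    contiguousFactor α β q * phiTerm (α * q) (β * q ^ 2) (β * q / α * q) q (-α⁻¹) n =
      (1 + α) / (α - β * q) *
        (qPoch (α * q) q n * ((1 - β * q) * qPoch (β * q ^ 2) q n) /
          (qPoch q q n * qPoch (β * q / α * q) q n) * (-α⁻¹) ^ n) := by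
  rw [contiguousFactor, phiTerm]
  ring

lemma qPoch_mul_one_sub_mul_sq (n : ℕ) :
    qPoch (β * q) q n * (1 - β * q * q ^ n) = (1 - β * q) * qPoch (β * q ^ 2) q n := by
  rw [qPoch_mul_one_sub, mul_assoc, ← sq]

variable {α β q}

lemma sub_mul_pow_ne_zero (hα : α ≠ 0) (hγ : ∀ j : ℕ, β * q / α * q ^ j ≠ 1) (j : ℕ) :
    α - β * q * q ^ j ≠ 0 := by
  have := sub_ne_zero.mpr (hγ j).symm
  contrapose! this
  field_simp
  linear_combination this

lemma phiTerm_succ_eq_contiguous (hq : ‖q‖ < 1) (hα : α ≠ 0)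
    (hγ : ∀ j : ℕ, β * q / α * q ^ j ≠ 1) (m : ℕ) :
    phiTerm α β (β * q / α) q (-(q / α)) (m + 1) =
      contiguousFactor α β q * phiTerm (α * q) (β * q ^ 2) (β * q / α * q) q (-α⁻¹) (m + 1) +
        contiguousRemainder α β q (m + 1) - contiguousRemainder α β q (m + 2) := by
  have hγq : qPoch (β * q / α * q) q (m + 1) =
      qPoch (β * q / α) q (m + 1) * (1 - β * q / α * q ^ (m + 1)) / (1 - β * q / α) := by
    refine eq_div_of_mul_eq ?_ (by rw [mul_comm, qPoch_mul_one_sub])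
    simpa using sub_ne_zero.mpr (hγ 0).symm
  have hq' : 1 - q * q ^ m ≠ 0 := by
    have := qPoch_self_ne_zero hq (m + 1)
    rw [qPoch_succ] at this
    exact right_ne_zero_of_mul this
  have hR := qPoch_self_ne_zero hq m
  have hG := qPoch_ne_zero hγ (m + 1)
  have hγ0 : α - β * q ≠ 0 := by simpa using sub_mul_pow_ne_zero hα hγ 0
  have hγm : α - β * q ^ 2 * q ^ m ≠ 0 := by
    convert sub_mul_pow_ne_zero hα hγ (m + 1) using 2
    ring
  have hx : (-(q / α)) ^ (m + 1) = q ^ (m + 1) * (-α⁻¹) ^ (m + 1) := by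
    rw [← mul_pow]
    ring
  rw [contiguousFactor_mul_phiTerm, ← qPoch_mul_one_sub_mul_sq, qPoch_succ (β * q), hγq]
  simp only [phiTerm, contiguousRemainder, qPoch_succ' α, qPoch_succ' β,
    qPoch_succ (α * q) q m, qPoch_succ (β * q) q m, qPoch_succ q q m,
    qPoch_succ (β * q / α) q (m + 1), hx, pow_succ (-α⁻¹), pow_succ q]
  -- Opaque atoms keep `field_simp` from normalising inside the arguments of `qPoch`.
  generalize qPoch (α * q) q m = P at *
  generalize qPoch (β * q) q m = Q at *
  generalize qPoch q q m = R at *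
  generalize qPoch (β * q / α) q (m + 1) = G at *
  generalize (-α⁻¹) ^ m = Y
  field_simp
  ring

lemma phiTerm_eq_contiguous (hq : ‖q‖ < 1) (hα : α ≠ 0) (hγ : ∀ j : ℕ, β * q / α * q ^ j ≠ 1)
    (i : ℕ) :
    phiTerm α β (β * q / α) q (-(q / α)) i =
      contiguousFactor α β q * phiTerm (α * q) (β * q ^ 2) (β * q / α * q) q (-α⁻¹) i +
        contiguousRemainder α β q i - contiguousRemainder α β q (i + 1) := by
  cases i with
  | zero =>
    have hγ0 : α - β * q ≠ 0 := by simpa using sub_mul_pow_ne_zero hα hγ 0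
    simp only [phiTerm, contiguousFactor, contiguousRemainder, qPoch_zero, qPoch_succ, pow_zero,
      zero_add, pow_one]
    field_simp
    ring
  | succ m => exact phiTerm_succ_eq_contiguous hq hα hγ m

lemma contiguousRemainder_succ_mul (hq : ‖q‖ < 1) (hγ : ∀ j : ℕ, β * q / α * q ^ j ≠ 1)
    (i : ℕ) :
    contiguousRemainder α β q (i + 1) * (1 - β * q * q ^ i) =
      (α * β * q ^ (i + 1) - 1) * (1 - β * q) * (-α⁻¹) / (1 - β * q / α) *
        phiTerm (α * q) (β * q ^ 2) (β * q / α * q) q (-α⁻¹) i := by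
  have hγ0 : 1 - β * q / α ≠ 0 := by simpa using sub_ne_zero.mpr (hγ 0).symm
  have hR := qPoch_self_ne_zero hq i
  have hG := qPoch_ne_zero (a := β * q / α * q) (q := q)
    (fun j => by rw [mul_assoc, ← pow_succ']; exact hγ (j + 1)) i
  calc contiguousRemainder α β q (i + 1) * (1 - β * q * q ^ i)
      = (α * β * q ^ (i + 1) - 1) * qPoch (α * q) q i *
          (qPoch (β * q) q i * (1 - β * q * q ^ i)) /
          (qPoch q q i * qPoch (β * q / α) q (i + 1)) * (-α⁻¹) ^ (i + 1) := by
        rw [contiguousRemainder]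
        ring
    _ = _ := by
        rw [qPoch_mul_one_sub_mul_sq, qPoch_succ', phiTerm, pow_succ (-α⁻¹)]
        field_simp

lemma summable_contiguousRemainder (hq : ‖q‖ < 1) (hγ : ∀ j : ℕ, β * q / α * q ^ j ≠ 1)
    (hB : Summable (phiTerm (α * q) (β * q ^ 2) (β * q / α * q) q (-α⁻¹))) :
    Summable (contiguousRemainder α β q) := by
  let ρ (z : ℂ) : ℂ := (α * β * q * z - 1) * (1 - β * q) * (-α⁻¹) / (1 - β * q / α) /
    (1 - β * q * z)
  have hpow := tendsto_pow_atTop_nhds_zero_of_norm_lt_one hq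
  have hρ : ContinuousAt ρ 0 := ContinuousAt.div (by fun_prop) (by fun_prop) (by simp)
  have hne : ∀ᶠ i in atTop, 1 - β * q * q ^ i ≠ 0 := by
    have : ContinuousAt (fun z : ℂ => 1 - β * q * z) 0 := by fun_prop
    exact (this.tendsto.comp hpow).eventually_ne (by simp)
  have hbig : (fun i => contiguousRemainder α β q (i + 1)) =O[atTop]
      phiTerm (α * q) (β * q ^ 2) (β * q / α * q) q (-α⁻¹) := by
    refine (((hρ.tendsto.comp hpow).isBigO_one ℂ).mul
      (isBigO_refl (phiTerm (α * q) (β * q ^ 2) (β * q / α * q) q (-α⁻¹)) atTop)).congr' ?_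
      (.of_eq (by simp only [one_mul]))
    filter_upwards [hne] with i hi
    rw [eq_div_of_mul_eq hi (contiguousRemainder_succ_mul hq hγ i)]
    simp only [ρ, Function.comp_apply, pow_succ']
    ring
  exact (summable_nat_add_iff 1).mp (summable_of_isBigO_nat' hB hbig)

theorem hasSum_phiTerm_contiguous (hq : ‖q‖ < 1) (hα : α ≠ 0)
    (hγ : ∀ j : ℕ, β * q / α * q ^ j ≠ 1)
    (hB : Summable (phiTerm (α * q) (β * q ^ 2) (β * q / α * q) q (-α⁻¹))) :
    HasSum (phiTerm α β (β * q / α) q (-(q / α)))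
      (contiguousFactor α β q * ∑' i, phiTerm (α * q) (β * q ^ 2) (β * q / α * q) q (-α⁻¹) i) := by
  have hT := summable_contiguousRemainder hq hγ hB
  have htel :
      HasSum (fun i => contiguousRemainder α β q i - contiguousRemainder α β q (i + 1)) 0 := by
    have := hT.hasSum.sub ((summable_nat_add_iff 1).mpr hT).hasSum
    rwa [hT.tsum_eq_zero_add, contiguousRemainder, zero_add, sub_self] at this
  simpa only [add_zero, ← add_sub_assoc, ← phiTerm_eq_contiguous hq hα hγ] using
    (hB.hasSum.mul_left (contiguousFactor α β q)).add htel

end Contiguous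

section Iteration

variable (a b q : ℂ)

noncomputable def shiftedPhiTerm (k : ℕ) : ℕ → ℂ :=
  phiTerm (a * q ^ k) (b * q ^ (2 * k)) (b * q ^ (k + 1) / a) q (-(q ^ ((1 : ℤ) - k) / a))

noncomputable def shiftFactor (k : ℕ) : ℂ :=
  (1 - -a * q ^ k) * (1 - b * q * (q ^ 2) ^ k) / (a * q ^ k * (1 - b * q / a * q ^ k))

lemma prod_shiftFactor (N : ℕ) :
    ∏ j ∈ range N, shiftFactor a b q j =
      qPoch (-a) q N * qPoch (b * q) (q ^ 2) N /
        (a ^ N * q ^ (N * (N - 1) / 2) * qPoch (b * q / a) q N) := by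
  simp only [shiftFactor, prod_div_distrib, prod_mul_distrib, prod_const, card_range]
  rw [prod_pow_eq_pow_sum, sum_range_id]
  rfl

variable {a b q}

lemma shiftedPhiTerm_eq (ha : a ≠ 0) (hq0 : q ≠ 0) (k : ℕ) :
    shiftedPhiTerm a b q k =
      phiTerm (a * q ^ k) (b * q ^ (2 * k)) (b * q ^ (2 * k) * q / (a * q ^ k)) q
        (-(q / (a * q ^ k))) := by
  have hc : b * q ^ (k + 1) / a = b * q ^ (2 * k) * q / (a * q ^ k) := by
    field_simp
    ring
  have hx : q ^ ((1 : ℤ) - k) / a = q / (a * q ^ k) := by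
    rw [zpow_sub₀ hq0, zpow_one, zpow_natCast, div_div, mul_comm]
  rw [shiftedPhiTerm, hc, hx]

lemma shiftedPhiTerm_succ_eq (ha : a ≠ 0) (hq0 : q ≠ 0) (k : ℕ) :
    shiftedPhiTerm a b q (k + 1) =
      phiTerm (a * q ^ k * q) (b * q ^ (2 * k) * q ^ 2) (b * q ^ (2 * k) * q / (a * q ^ k) * q) q
        (-(a * q ^ k)⁻¹) := by
  have hc : b * q ^ (k + 1 + 1) / a = b * q ^ (2 * k) * q / (a * q ^ k) * q := by
    field_simp
    ring
  have hx : q ^ ((1 : ℤ) - (k + 1 : ℕ)) / a = (a * q ^ k)⁻¹ := by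
    rw [show (1 : ℤ) - (k + 1 : ℕ) = -k by push_cast; ring, zpow_neg, zpow_natCast, mul_inv,
      div_eq_mul_inv, mul_comm]
  rw [shiftedPhiTerm, hc, hx, pow_succ, ← mul_assoc, mul_add, mul_one, pow_add, ← mul_assoc b]

lemma shiftFactor_eq_contiguousFactor (ha : a ≠ 0) (k : ℕ) :
    shiftFactor a b q k = contiguousFactor (a * q ^ k) (b * q ^ (2 * k)) q := by
  rw [shiftFactor, contiguousFactor]
  congr 1
  · ring
  · field_simp
    ring

lemma hasSum_shiftedPhiTerm_succ (hq : ‖q‖ < 1) (ha : a ≠ 0) (hq0 : q ≠ 0)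
    (hc : ∀ j : ℕ, b * q / a * q ^ j ≠ 1) (k : ℕ) (hS : Summable (shiftedPhiTerm a b q (k + 1))) :
    HasSum (shiftedPhiTerm a b q k)
      (shiftFactor a b q k * ∑' i, shiftedPhiTerm a b q (k + 1) i) := by
  have hα : a * q ^ k ≠ 0 := mul_ne_zero ha (pow_ne_zero _ hq0)
  have hγ (j : ℕ) : b * q ^ (2 * k) * q / (a * q ^ k) * q ^ j ≠ 1 := by
    convert hc (k + j) using 1
    field_simp
    ring
  rw [shiftedPhiTerm_succ_eq ha hq0] at hS ⊢
  rw [shiftedPhiTerm_eq ha hq0, shiftFactor_eq_contiguousFactor ha]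
  exact hasSum_phiTerm_contiguous hq hα hγ hS

lemma hasSum_shiftedPhiTerm_zero (hq : ‖q‖ < 1) (ha : a ≠ 0) (hq0 : q ≠ 0)
    (hc : ∀ j : ℕ, b * q / a * q ^ j ≠ 1) (N : ℕ) (hS : Summable (shiftedPhiTerm a b q N)) :
    HasSum (shiftedPhiTerm a b q 0)
      ((∏ j ∈ range N, shiftFactor a b q j) * ∑' i, shiftedPhiTerm a b q N i) := by
  induction N with
  | zero => simpa using hS.hasSum
  | succ N ih =>
    have hstep := hasSum_shiftedPhiTerm_succ hq ha hq0 hc N hS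
    rw [prod_range_succ, mul_assoc, ← hstep.tsum_eq]
    exact ih hstep.summable

end Iteration

theorem stmt_14_general (q a b : ℂ) (hq : ‖q‖ < 1) (ha : a ≠ 0) (hq0 : q ≠ 0)
    (hc : ∀ j : ℕ, (b * q / a) * q ^ j ≠ 1) (N : ℕ)
    (h2 : Summable (fun i : ℕ =>
      qPoch (a * q ^ N) q i * qPoch (b * q ^ (2 * N)) q i /
        (qPoch q q i * qPoch (b * q ^ (N + 1) / a) q i) *
        (-(q ^ ((1 : ℤ) - N) / a)) ^ i)) :
    phi a b (b * q / a) q (-(q / a)) =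
      qPoch (-a) q N * qPoch (b * q) (q ^ 2) N /
          (a ^ N * q ^ (N * (N - 1) / 2) * qPoch (b * q / a) q N) *
        phi (a * q ^ N) (b * q ^ (2 * N)) (b * q ^ (N + 1) / a) q
          (-(q ^ ((1 : ℤ) - N) / a)) := by
  have h0 : phi a b (b * q / a) q (-(q / a)) = ∑' i, shiftedPhiTerm a b q 0 i := by
    simp [phi, shiftedPhiTerm, phiTerm]
  rw [h0, (hasSum_shiftedPhiTerm_zero hq ha hq0 hc N h2).tsum_eq, prod_shiftFactor]
  rfl

theorem stmt_14 (q a b : ℂ) (hq : ‖q‖ < 1) (ha : a ≠ 0) (hq0 : q ≠ 0)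
    (hc : ∀ j : ℕ, (b * q / a) * q ^ j ≠ 1) (N : ℕ) (hN : 0 < N)
    (h1 : Summable (fun i : ℕ =>
      qPoch a q i * qPoch b q i / (qPoch q q i * qPoch (b * q / a) q i) * (-(q / a)) ^ i))
    (h2 : Summable (fun i : ℕ =>
      qPoch (a * q ^ N) q i * qPoch (b * q ^ (2 * N)) q i /
        (qPoch q q i * qPoch (b * q ^ (N + 1) / a) q i) *
        (-(q ^ ((1 : ℤ) - N) / a)) ^ i)) :
    phi a b (b * q / a) q (-(q / a)) =
      qPoch (-a) q N * qPoch (b * q) (q ^ 2) N /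
          (a ^ N * q ^ (N * (N - 1) / 2) * qPoch (b * q / a) q N) *
        phi (a * q ^ N) (b * q ^ (2 * N)) (b * q ^ (N + 1) / a) q
          (-(q ^ ((1 : ℤ) - N) / a)) :=
  stmt_14_general q a b hq ha hq0 hc N h2
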